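/- Let n ≥ 1 be an integer, let f0 : (0,∞) → [0,∞) be an integrable function with ∫₀^∞ f0 = 1, F0(x) = ∫₀^x f0(y) dy, ρ(t) = 1 − F0(t), and L(t) = (1 − ρ(t)²)/2. Let a₁ ≤ … ≤ a_n be points of (0,∞) with F0(a_k) = (2k−1)/(2n), and set empN₀ = (1/n) Σ_k δ_{a_k}. Let T > 0, N ≥ 1 an integer, h_N = T/N, and t_i = i h_N for 0 ≤ i ≤ N. Let μ : [0,T] → (finite Borel measures on [0,∞)) and Lⁿ : [0,T] → ℝ be such that: (i) Lⁿ is nondecreasing; (ii) for all 0 ≤ t₀ ≤ t ≤ T, d_BL(μ(t), S*_{t−t₀} μ(t₀)) ≤ 2(Lⁿ(t) − Lⁿ(t₀)); (iii) μ(t)([0,∞)) ≤ 1 for all t ∈ [0,T]; and (iv) ω(h; μ(t)) ≤ ω(h; empN₀) for all h > 0 and t ∈ [0,T]. Then sup_{t ∈ [0,T]} d_BL( μ(t), ρ(t) S*_t empN₀ ) ≤ max_{0 ≤ i ≤ N} d_BL( μ(t_i), ρ(t_i) S*_{t_i} empN₀ ) + 4 ( sup_{t ∈ [0,T]} |Lⁿ(t)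 − L(t)| + ω(h_N; F0) + h_N + 1/n ). -/

import Mathlib

open MeasureTheory Set

/-- `‖φ‖_BL ≤ 1`: the function `φ` is bounded by `a` and Lipschitz with constant `b`
for some `a + b ≤ 1` (bounded-Lipschitz norm `sup |φ| + Lip(φ)` at most one). -/
def BLnormLEone (φ : ℝ → ℝ) : Prop :=
  ∃ a b : NNReal, (a : ℝ) + (b : ℝ) ≤ 1 ∧ (∀ x, |φ x| ≤ a) ∧ LipschitzWith b φ

/-- The bounded-Lipschitz distance between two finite Borel measures:
`d_BL(μ,ν) = sup { ∫ φ dμ − ∫ φ dν : ‖φ‖_BL ≤ 1 }`. -/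
noncomputable def dBL (μ ν : Measure ℝ) : ℝ :=
  sSup {d : ℝ | ∃ φ : ℝ → ℝ, BLnormLEone φ ∧ d = (∫ x, φ x ∂μ) - ∫ x, φ x ∂ν}

/-- The shifted measure `S*_h μ`: the pushforward under `x ↦ x − h` of the restriction of
`μ` to `[h,∞)` (for `h = 0` and `μ` supported on `[0,∞)` this is `μ` itself). -/
noncomputable def Sstar (h : ℝ) (μ : Measure ℝ) : Measure ℝ :=
  (μ.restrict (Ici h)).map (fun x => x - h)

/-- The modulus `ω(h; μ) = sup_{x ≥ 0} μ([x, x+h))`. -/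
noncomputable def omegaMeas (h : ℝ) (μ : Measure ℝ) : ℝ :=
  ⨆ x : Ici (0:ℝ), (μ (Ico (x : ℝ) ((x : ℝ) + h))).toReal

lemma bl_bound_le_one {φ : ℝ → ℝ} (hφ : BLnormLEone φ) : ∀ x, |φ x| ≤ 1 := by
  obtain ⟨a, b, hab, ha, -⟩ := hφ
  intro x
  exact (ha x).trans (by nlinarith [b.coe_nonneg])

lemma bl_continuous {φ : ℝ → ℝ} (hφ : BLnormLEone φ) : Continuous φ := by
  obtain ⟨a, b, -, -, hb⟩ := hφ
  exact hb.continuous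

lemma integrable_of_bound {φ : ℝ → ℝ} (C : ℝ) (hc : Continuous φ) (hC : ∀ x, |φ x| ≤ C)
    (m : Measure ℝ) [IsFiniteMeasure m] : Integrable φ m :=
  (integrable_const C).mono' hc.aestronglyMeasurable (ae_of_all _ fun x => by
    simpa [Real.norm_eq_abs] using hC x)

lemma abs_integral_le_bound {φ : ℝ → ℝ} (C : ℝ) (hc : Continuous φ) (hC : ∀ x, |φ x| ≤ C)
    (m : Measure ℝ) [IsFiniteMeasure m] : |∫ x, φ x ∂m| ≤ C * (m univ).toReal := by
  calc |∫ x, φ x ∂m| ≤ ∫ x, C ∂m := by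
        refine (norm_integral_le_integral_norm φ).trans ?_
        refine integral_mono_of_nonneg (ae_of_all _ fun x => norm_nonneg _)
          (integrable_const C) (ae_of_all _ fun x => by simpa [Real.norm_eq_abs] using hC x)
    _ = C * (m univ).toReal := by simp [integral_const]; rw [measureReal_def]; ring

lemma abs_setIntegral_le_bound {φ : ℝ → ℝ} (C : ℝ) (hc : Continuous φ) (hC : ∀ x, |φ x| ≤ C)
    (m : Measure ℝ) [IsFiniteMeasure m] (s : Set ℝ) :
    |∫ x in s, φ x ∂m| ≤ C * (m s).toReal := by
  have := abs_integral_le_bound C hc hC (m.restrict s)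
  simpa [Measure.restrict_apply_univ] using this

/-- Every element of the dBL defining set is bounded. -/
lemma dBL_mem_le {μ ν : Measure ℝ} [IsFiniteMeasure μ] [IsFiniteMeasure ν]
    {d : ℝ} (hd : d ∈ {d : ℝ | ∃ φ : ℝ → ℝ, BLnormLEone φ ∧
      d = (∫ x, φ x ∂μ) - ∫ x, φ x ∂ν}) :
    d ≤ (μ univ).toReal + (ν univ).toReal := by
  obtain ⟨φ, hφ, rfl⟩ := hd
  have h1 := abs_integral_le_bound 1 (bl_continuous hφ) (bl_bound_le_one hφ) μ
  have h2 := abs_integral_le_bound 1 (bl_continuous hφ) (bl_bound_le_one hφ) ν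
  have := abs_sub_abs_le_abs_sub (∫ x, φ x ∂μ) (∫ x, φ x ∂ν)
  have h3 : |∫ x, φ x ∂μ - ∫ x, φ x ∂ν| ≤ |∫ x, φ x ∂μ| + |∫ x, φ x ∂ν| := abs_sub _ _
  calc (∫ x, φ x ∂μ) - ∫ x, φ x ∂ν ≤ |∫ x, φ x ∂μ - ∫ x, φ x ∂ν| := le_abs_self _
    _ ≤ 1 * (μ univ).toReal + 1 * (ν univ).toReal := h3.trans (add_le_add h1 h2)
    _ = (μ univ).toReal + (ν univ).toReal := by ring

lemma dBL_bddAbove (μ ν : Measure ℝ) [IsFiniteMeasure μ] [IsFiniteMeasure ν] :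
    BddAbove {d : ℝ | ∃ φ : ℝ → ℝ, BLnormLEone φ ∧
      d = (∫ x, φ x ∂μ) - ∫ x, φ x ∂ν} :=
  ⟨_, fun _ hd => dBL_mem_le hd⟩

lemma le_dBL {μ ν : Measure ℝ} [IsFiniteMeasure μ] [IsFiniteMeasure ν]
    {φ : ℝ → ℝ} (hφ : BLnormLEone φ) :
    (∫ x, φ x ∂μ) - ∫ x, φ x ∂ν ≤ dBL μ ν :=
  le_csSup (dBL_bddAbove μ ν) ⟨φ, hφ, rfl⟩

lemma dBL_nonneg (μ ν : Measure ℝ) [IsFiniteMeasure μ] [IsFiniteMeasure ν] :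
    0 ≤ dBL μ ν := by
  have : (0:ℝ) = (∫ x, (0:ℝ) ∂μ) - ∫ x, (0:ℝ) ∂ν := by simp
  have h0 : BLnormLEone (fun _ : ℝ => (0:ℝ)) :=
    ⟨0, 0, by norm_num, fun x => by norm_num, LipschitzWith.const 0⟩
  simpa using le_dBL (μ := μ) (ν := ν) h0

lemma dBL_le_of_forall {μ ν : Measure ℝ} {C : ℝ} (hC : 0 ≤ C)
    (h : ∀ φ : ℝ → ℝ, BLnormLEone φ → (∫ x, φ x ∂μ) - ∫ x, φ x ∂ν ≤ C) :
    dBL μ ν ≤ C := by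
  refine Real.sSup_le ?_ hC
  rintro d ⟨φ, hφ, rfl⟩
  exact h φ hφ

lemma dBL_le_mass (μ ν : Measure ℝ) [IsFiniteMeasure μ] [IsFiniteMeasure ν] :
    dBL μ ν ≤ (μ univ).toReal + (ν univ).toReal :=
  Real.sSup_le (fun _ hd => dBL_mem_le hd) (by positivity)

lemma Sstar_apply (h : ℝ) (m : Measure ℝ) {s : Set ℝ} (hs : MeasurableSet s) :
    Sstar h m s = m (((fun x : ℝ => x - h) ⁻¹' s) ∩ Ici h) := by
  rw [Sstar, Measure.map_apply (measurable_sub_const h) hs, Measure.restrict_apply]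
  exact (measurable_sub_const h) hs

instance Sstar_finite (h : ℝ) (m : Measure ℝ) [IsFiniteMeasure m] :
    IsFiniteMeasure (Sstar h m) := by
  constructor
  rw [Sstar_apply h m MeasurableSet.univ]
  exact lt_of_le_of_lt (measure_mono (inter_subset_right.trans (subset_univ _))) (measure_lt_top m univ)

lemma Sstar_univ_le (h : ℝ) (m : Measure ℝ) : Sstar h m univ ≤ m univ := by
  rw [Sstar_apply h m MeasurableSet.univ]
  exact measure_mono (subset_univ _)

lemma smul_finite (c : ℝ) (m : Measure ℝ) [IsFiniteMeasure m] :
    IsFiniteMeasure (ENNReal.ofReal c • m) := by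
  constructor
  rw [Measure.smul_apply, smul_eq_mul]
  exact ENNReal.mul_lt_top ENNReal.ofReal_lt_top (measure_lt_top m univ)

lemma integral_Sstar {φ : ℝ → ℝ} (hφ : Continuous φ) (h : ℝ) (m : Measure ℝ) :
    ∫ x, φ x ∂(Sstar h m) = ∫ x in Ici h, φ (x - h) ∂m := by
  rw [Sstar, integral_map (measurable_sub_const h).aemeasurable hφ.aestronglyMeasurable]


lemma abs_max0_sub_max0 (u v : ℝ) : |max u 0 - max v 0| ≤ |u - v| := by
  have h1 : max u 0 = (u + |u|)/2 := by rcases le_total u 0 with h | h <;>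
    simp [max_eq_right, max_eq_left, abs_of_nonpos, abs_of_nonneg, h]
  have h2 : max v 0 = (v + |v|)/2 := by rcases le_total v 0 with h | h <;>
    simp [max_eq_right, max_eq_left, abs_of_nonpos, abs_of_nonneg, h]
  rw [h1, h2, abs_le]
  have h3 : abs (|u| - |v|) ≤ |u - v| := abs_abs_sub_abs_le_abs_sub u v
  constructor <;> nlinarith [le_abs_self (u-v), neg_abs_le (u-v), le_abs_self (|u|-|v|),
    neg_abs_le (|u|-|v|)]

lemma abs_min0_sub_min0 (u v : ℝ) : |min u 0 - min v 0| ≤ |u - v| := by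
  have h1 : min u 0 = (u - |u|)/2 := by rcases le_total u 0 with h | h <;>
    simp [min_eq_right, min_eq_left, abs_of_nonpos, abs_of_nonneg, h] <;> ring
  have h2 : min v 0 = (v - |v|)/2 := by rcases le_total v 0 with h | h <;>
    simp [min_eq_right, min_eq_left, abs_of_nonpos, abs_of_nonneg, h] <;> ring
  rw [h1, h2, abs_le]
  have h3 : abs (|u| - |v|) ≤ |u - v| := abs_abs_sub_abs_le_abs_sub u v
  constructor <;> nlinarith [le_abs_self (u-v), neg_abs_le (u-v), le_abs_self (|u|-|v|),
    neg_abs_le (|u|-|v|)]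

lemma psi_exists {φ : ℝ → ℝ} {a b : NNReal} (ha : ∀ x, |φ x| ≤ a) (hb : LipschitzWith b φ)
    (h : ℝ) :
    ∃ ψ : ℝ → ℝ, (∀ x, |ψ x| ≤ a) ∧ LipschitzWith b ψ ∧ (∀ x, h ≤ x → ψ x = φ (x - h)) ∧
      (0 ≤ φ 0 → ∀ x, x < h → 0 ≤ ψ x ∧ ψ x ≤ φ 0) ∧
      (φ 0 ≤ 0 → ∀ x, x < h → φ 0 ≤ ψ x ∧ ψ x ≤ 0) := by
  set c := φ 0 with hc
  set g : ℝ → ℝ := fun x => if 0 ≤ c then max (c - b*(h-x)) 0 else min (c + b*(h-x)) 0 with hg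
  have hgh : g h = c := by
    rcases le_or_gt 0 c with h0 | h0
    · simp [hg, h0, max_eq_left h0]
    · simp [hg, not_le.mpr h0, min_eq_left h0.le]
  have hglip : ∀ x y : ℝ, |g x - g y| ≤ b * |x - y| := by
    intro x y
    rcases le_or_gt 0 c with h0 | h0
    · simp only [hg, if_pos h0]
      refine (abs_max0_sub_max0 _ _).trans (le_of_eq ?_)
      rw [show c - ↑b*(h-x) - (c - ↑b*(h-y)) = ↑b * (x - y) by ring, abs_mul,
        abs_of_nonneg b.coe_nonneg]
    · simp only [hg, if_neg (not_le.mpr h0)]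
      refine (abs_min0_sub_min0 _ _).trans (le_of_eq ?_)
      rw [show c + ↑b*(h-x) - (c + ↑b*(h-y)) = ↑b * (y - x) by ring, abs_mul,
        abs_of_nonneg b.coe_nonneg, abs_sub_comm]
  have hgbd : ∀ x, x ≤ h → (0 ≤ c → 0 ≤ g x ∧ g x ≤ c) ∧ (c ≤ 0 → c ≤ g x ∧ g x ≤ 0) := by
    intro x hx
    have hbx : 0 ≤ (b:ℝ) * (h - x) := mul_nonneg b.coe_nonneg (by linarith)
    constructor
    · intro h0
      simp only [hg, if_pos h0]
      exact ⟨le_max_right _ _, max_le (by linarith) h0⟩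
    · intro h0
      rcases lt_or_eq_of_le h0 with h0' | h0'
      · simp only [hg, if_neg (not_le.mpr h0')]
        exact ⟨le_min (by linarith) h0, min_le_right _ _⟩
      · have hgx : g x = 0 := by
          simp only [hg, if_pos (h0' ▸ le_rfl : 0 ≤ c)]
          exact max_eq_right (by linarith)
        rw [hgx]
        exact ⟨h0, le_rfl⟩
  classical
  refine ⟨fun x => if h ≤ x then φ (x - h) else g x, ?_, ?_, ?_, ?_, ?_⟩
  · intro x
    by_cases hx : h ≤ x
    · simpa [hx] using ha (x - h)
    · simp only [if_neg hx]
      have hx' : x ≤ h := (not_le.mp hx).le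
      have hbd := hgbd x hx'
      have hca : |c| ≤ a := ha 0
      rcases le_total 0 c with h0 | h0
      · have h1 := hbd.1 h0
        rw [abs_of_nonneg h1.1]
        exact h1.2.trans ((le_abs_self c).trans hca)
      · have h1 := hbd.2 h0
        rw [abs_of_nonpos h1.2]
        exact le_trans (by linarith [h1.1]) ((neg_le_abs c).trans hca)
  · rw [lipschitzWith_iff_dist_le_mul]
    have key : ∀ x y : ℝ, x ≤ y →
        |(if h ≤ x then φ (x-h) else g x) - (if h ≤ y then φ (y-h) else g y)| ≤ b * (y - x) := by
      intro x y hxy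
      by_cases hx : h ≤ x
      · have hy : h ≤ y := hx.trans hxy
        simp only [if_pos hx, if_pos hy]
        have hd := hb.dist_le_mul (x - h) (y - h)
        rw [Real.dist_eq, Real.dist_eq] at hd
        refine hd.trans (le_of_eq ?_)
        rw [show x - h - (y - h) = -(y - x) by ring, abs_neg, abs_of_nonneg (by linarith)]
      · by_cases hy : h ≤ y
        · simp only [if_neg hx, if_pos hy]
          have t1 : |g x - c| ≤ b * (h - x) := by
            have hgl := hglip x h
            rw [hgh] at hgl
            refine hgl.trans (le_of_eq ?_)
            rw [abs_of_nonpos (by linarith [not_le.mp hx] : x - h ≤ 0)]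
            ring
          have t2 : |c - φ (y - h)| ≤ b * (y - h) := by
            have hd := hb.dist_le_mul 0 (y - h)
            rw [Real.dist_eq, Real.dist_eq] at hd
            rw [hc]
            refine hd.trans (le_of_eq ?_)
            rw [abs_of_nonpos (by linarith : (0:ℝ) - (y - h) ≤ 0)]
            ring
          calc |g x - φ (y-h)| ≤ |g x - c| + |c - φ (y-h)| := abs_sub_le _ _ _
            _ ≤ b * (h - x) + b * (y - h) := add_le_add t1 t2
            _ = b * (y - x) := by ring
        · simp only [if_neg hx, if_neg hy]
          refine (hglip x y).trans (le_of_eq ?_)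
          rw [abs_of_nonpos (by linarith : x - y ≤ 0)]
          ring
    intro x y
    rw [Real.dist_eq, Real.dist_eq]
    rcases le_total x y with hxy | hxy
    · refine (key x y hxy).trans (le_of_eq ?_)
      rw [abs_sub_comm, abs_of_nonneg (sub_nonneg.mpr hxy)]
    · rw [abs_sub_comm]
      refine (key y x hxy).trans (le_of_eq ?_)
      rw [abs_of_nonneg (sub_nonneg.mpr hxy)]
  · intro x hx; simp [hx]
  · intro h0 x hx
    simp only [if_neg (not_le.mpr hx)]
    exact (hgbd x hx.le).1 h0
  · intro h0 x hx
    simp only [if_neg (not_le.mpr hx)]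
    exact (hgbd x hx.le).2 h0

open scoped Classical
lemma empN_apply {n : ℕ} (aa : Fin n → ℝ) {s : Set ℝ} (hs : MeasurableSet s) :
    ((n:ENNReal)⁻¹ • ∑ k : Fin n, Measure.dirac (aa k)) s
      = (n:ENNReal)⁻¹ * ((Finset.univ.filter fun k => aa k ∈ s).card) := by
  rw [Measure.smul_apply, smul_eq_mul]
  congr 1
  have h1 : (∑ k : Fin n, Measure.dirac (aa k)) s = ∑ k : Fin n, Measure.dirac (aa k) s := by
    rw [Measure.coe_finset_sum]; simp
  rw [h1]
  have h2 : ∀ k : Fin n, Measure.dirac (aa k) s = if aa k ∈ s then 1 else 0 := by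
    intro k
    rw [Measure.dirac_apply' _ hs, Set.indicator_apply]
    split <;> simp
  simp_rw [h2]
  rw [Finset.sum_boole]

lemma empN_toReal {n : ℕ} (hn : 1 ≤ n) (aa : Fin n → ℝ) {s : Set ℝ} (hs : MeasurableSet s) :
    (((n:ENNReal)⁻¹ • ∑ k : Fin n, Measure.dirac (aa k)) s).toReal
      = ((Finset.univ.filter fun k => aa k ∈ s).card : ℝ) / n := by
  rw [empN_apply aa hs, ENNReal.toReal_mul, ENNReal.toReal_inv]
  norm_num
  ring

lemma empN_univ {n : ℕ} (hn : 1 ≤ n) (aa : Fin n → ℝ) :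
    ((n:ENNReal)⁻¹ • ∑ k : Fin n, Measure.dirac (aa k)) univ = 1 := by
  rw [empN_apply aa MeasurableSet.univ]
  simp only [mem_univ, Finset.filter_true, Finset.card_univ, Fintype.card_fin]
  rw [ENNReal.inv_mul_cancel]
  · exact_mod_cast Nat.one_le_iff_ne_zero.mp hn
  · exact ENNReal.natCast_ne_top n

lemma card_quantile_bound {n : ℕ} (hn : 1 ≤ n) {aa : Fin n → ℝ} {F0 : ℝ → ℝ}
    (hF : Monotone F0) (hq : ∀ k : Fin n, F0 (aa k) = (2 * (k:ℝ) + 1) / (2 * n))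
    {x y : ℝ} (hxy : x ≤ y) :
    ((Finset.univ.filter fun k : Fin n => aa k ∈ Ico x y).card : ℝ)
      ≤ n * (F0 y - F0 x) + 1 := by
  set S := Finset.univ.filter fun k : Fin n => aa k ∈ Ico x y with hS
  have hFxy : 0 ≤ F0 y - F0 x := sub_nonneg.mpr (hF hxy)
  rcases S.eq_empty_or_nonempty with he | hne
  · rw [he]
    simp
    positivity
  · set k0 := S.min' hne with hk0
    set k1 := S.max' hne with hk1
    have hk0m : aa k0 ∈ Ico x y := (Finset.mem_filter.mp (S.min'_mem hne)).2
    have hk1m : aa k1 ∈ Ico x y := (Finset.mem_filter.mp (S.max'_mem hne)).2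
    have hsub : S ⊆ Finset.Icc k0 k1 := by
      intro k hk
      exact Finset.mem_Icc.mpr ⟨S.min'_le k hk, S.le_max' k hk⟩
    have hk01 : k0 ≤ k1 := S.min'_le k1 (S.max'_mem hne)
    have hcard : S.card ≤ (k1:ℕ) + 1 - (k0:ℕ) := by
      refine (Finset.card_le_card hsub).trans ?_
      rw [Fin.card_Icc]
    have hcardR : (S.card : ℝ) ≤ (k1:ℕ) - (k0:ℕ) + 1 := by
      have : ((k1:ℕ) + 1 - (k0:ℕ) : ℕ) = (k1:ℕ) + 1 - (k0:ℕ) := rfl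
      calc (S.card : ℝ) ≤ (((k1:ℕ) + 1 - (k0:ℕ) : ℕ) : ℝ) := by exact_mod_cast hcard
        _ = (k1:ℕ) + 1 - (k0:ℕ) := by
            rw [Nat.cast_sub (by omega : (k0:ℕ) ≤ (k1:ℕ) + 1)]
            push_cast; ring
        _ = (k1:ℕ) - (k0:ℕ) + 1 := by ring
    have hdiff : ((k1:ℕ) : ℝ) - ((k0:ℕ) : ℝ) ≤ n * (F0 y - F0 x) := by
      have h1 : F0 (aa k0) ≥ F0 x := hF hk0m.1
      have h2 : F0 (aa k1) ≤ F0 y := hF hk1m.2.le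
      have e1 := hq k0
      have e2 := hq k1
      have hnpos : (0:ℝ) < n := by exact_mod_cast hn
      have : F0 (aa k1) - F0 (aa k0) = ((k1:ℕ) - (k0:ℕ)) / n := by
        rw [e1, e2]; field_simp; ring
      have h3 : ((k1:ℕ) - (k0:ℕ) : ℝ) / n ≤ F0 y - F0 x := by
        rw [← this]; linarith
      calc ((k1:ℕ) : ℝ) - ((k0:ℕ) : ℝ) = (((k1:ℕ) - (k0:ℕ) : ℝ) / n) * n := by field_simp
        _ ≤ (F0 y - F0 x) * n := by
            exact mul_le_mul_of_nonneg_right h3 hnpos.le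
        _ = n * (F0 y - F0 x) := by ring
    linarith

lemma empN_Ico_le {n : ℕ} (hn : 1 ≤ n) {aa : Fin n → ℝ} {F0 : ℝ → ℝ}
    (hF : Monotone F0) (hq : ∀ k : Fin n, F0 (aa k) = (2 * (k:ℝ) + 1) / (2 * n))
    {x y : ℝ} (hxy : x ≤ y) :
    ((((n:ENNReal))⁻¹ • ∑ k : Fin n, Measure.dirac (aa k)) (Ico x y)).toReal
      ≤ (F0 y - F0 x) + 1 / n := by
  rw [empN_toReal hn aa measurableSet_Ico]
  have hnpos : (0:ℝ) < n := by exact_mod_cast hn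
  have := card_quantile_bound hn hF hq hxy
  rw [div_le_iff₀ hnpos]
  have h4 : (F0 y - F0 x + 1 / n) * n = n * (F0 y - F0 x) + 1 := by field_simp
  rw [h4]
  convert this using 4 <;> rfl

set_option maxHeartbeats 2000000 in
/-- grid interpolation estimate for the empirical measure.
With `F0`, `ρ(t) = 1 − F0(t)`, `L(t) = (1 − ρ(t)²)/2`, quantile points `a_k`, empirical
initial measure `empN₀`, grid `t_i = i T/N`, and any family `μ(t)` of sub-probability
measures on `[0,∞)` together with a nondecreasing `Lⁿ` satisfying the drift/removal
estimate (ii) and the modulus comparison (iv), one has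
`sup_{t∈[0,T]} d_BL(μ(t), ρ(t) S*_t empN₀)
  ≤ max_i d_BL(μ(t_i), ρ(t_i) S*_{t_i} empN₀)
    + 4 (sup_{t∈[0,T]} |Lⁿ(t) − L(t)| + ω(T/N; F0) + T/N + 1/n)`. -/
theorem grid_interpolation_estimate
    (n : ℕ) (hn : 1 ≤ n)
    (f0 : ℝ → ℝ)
    (hf0nonneg : ∀ x ∈ Ioi (0:ℝ), 0 ≤ f0 x)
    (hf0int : IntegrableOn f0 (Ioi 0))
    (hf0norm : ∫ y in Ioi (0:ℝ), f0 y = 1)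
    (F0 : ℝ → ℝ) (hF0 : ∀ x, F0 x = ∫ y in Ioc (0:ℝ) x, f0 y)
    (ρ : ℝ → ℝ) (hρ : ∀ t, ρ t = 1 - F0 t)
    (L : ℝ → ℝ) (hL : ∀ t, L t = (1 - (ρ t) ^ 2) / 2)
    (a : Fin n → ℝ) (hamono : Monotone a) (hapos : ∀ k, 0 < a k)
    (hquant : ∀ k : Fin n, F0 (a k) = (2 * (k : ℝ) + 1) / (2 * n))
    (empN : Measure ℝ)
    (hempN : empN = (n : ENNReal)⁻¹ • ∑ k : Fin n, Measure.dirac (a k))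
    (T : ℝ) (hT : 0 < T) (N : ℕ) (hN : 1 ≤ N)
    (μ : ℝ → Measure ℝ) (hμfin : ∀ t, IsFiniteMeasure (μ t))
    (hμsupp : ∀ t ∈ Icc (0:ℝ) T, μ t (Iio 0) = 0)
    (Ln : ℝ → ℝ)
    (hLn : MonotoneOn Ln (Icc 0 T))
    (hshift : ∀ t₀ t : ℝ, 0 ≤ t₀ → t₀ ≤ t → t ≤ T →
      dBL (μ t) (Sstar (t - t₀) (μ t₀)) ≤ 2 * (Ln t - Ln t₀))
    (hmass : ∀ t ∈ Icc (0:ℝ) T, μ t univ ≤ 1)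
    (hmod : ∀ h : ℝ, 0 < h → ∀ t ∈ Icc (0:ℝ) T, omegaMeas h (μ t) ≤ omegaMeas h empN) :
    (⨆ t : Icc (0:ℝ) T, dBL (μ (t : ℝ)) (ENNReal.ofReal (ρ (t : ℝ)) • Sstar (t : ℝ) empN))
      ≤ (⨆ i : Fin (N + 1), dBL (μ ((i : ℕ) * (T / N)))
            (ENNReal.ofReal (ρ ((i : ℕ) * (T / N))) • Sstar ((i : ℕ) * (T / N)) empN))
        + 4 * ((⨆ t : Icc (0:ℝ) T, |Ln (t : ℝ) - L (t : ℝ)|)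
            + (⨆ x : Ici (0:ℝ), (F0 ((x : ℝ) + T / N) - F0 (x : ℝ)))
            + T / N + 1 / n) := by
  
  classical
  have hnR : (0:ℝ) < n := by exact_mod_cast hn
  have hNR : (0:ℝ) < N := by exact_mod_cast hN
  have hdt : 0 < T / N := div_pos hT hNR
  have hinv : 0 < 1 / (n:ℝ) := by positivity
  -- F0 facts
  have hf0nonneg' : (0:ℝ → ℝ) ≤ᵐ[volume.restrict (Ioi 0)] f0 :=
    (ae_restrict_iff' measurableSet_Ioi).mpr (ae_of_all _ fun z hz => hf0nonneg z hz)
  have hF0mono : Monotone F0 := by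
    intro x y hxy
    rw [hF0 x, hF0 y]
    refine setIntegral_mono_set (hf0int.mono_set Ioc_subset_Ioi_self) ?_
      (HasSubset.Subset.eventuallyLE (Ioc_subset_Ioc_right hxy))
    exact (ae_restrict_iff' measurableSet_Ioc).mpr (ae_of_all _ fun z hz => hf0nonneg z hz.1)
  have hF0nonneg : ∀ x, 0 ≤ F0 x := fun x => by
    rw [hF0 x]; exact setIntegral_nonneg measurableSet_Ioc fun z hz => hf0nonneg z hz.1
  have hF0le1 : ∀ x, F0 x ≤ 1 := fun x => by
    rw [hF0 x, ← hf0norm]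
    exact setIntegral_mono_set hf0int hf0nonneg'
      (HasSubset.Subset.eventuallyLE Ioc_subset_Ioi_self)
  have hρnn : ∀ u, 0 ≤ ρ u := fun u => by rw [hρ]; linarith [hF0le1 u]
  have hρle1 : ∀ u, ρ u ≤ 1 := fun u => by rw [hρ]; linarith [hF0nonneg u]
  have hempN_univ : empN univ = 1 := by rw [hempN]; exact empN_univ hn a
  haveI hempfin : IsFiniteMeasure empN :=
    ⟨by rw [hempN_univ]; exact ENNReal.one_lt_top⟩
  have hempN_Ico : ∀ x y : ℝ, x ≤ y → (empN (Ico x y)).toReal ≤ F0 y - F0 x + 1/n :=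
    fun x y hxy => by rw [hempN]; exact empN_Ico_le hn hF0mono hquant hxy
  haveI : Nonempty (Icc (0:ℝ) T) := ⟨⟨0, mem_Icc.mpr ⟨le_rfl, hT.le⟩⟩⟩
  haveI : Nonempty (Ici (0:ℝ)) := ⟨⟨0, self_mem_Ici⟩⟩
  -- the three sups
  have hWbdd : BddAbove (range fun x : Ici (0:ℝ) => F0 ((x : ℝ) + T / N) - F0 (x : ℝ)) := by
    refine ⟨1, ?_⟩
    rintro _ ⟨x, rfl⟩
    show F0 ((x : ℝ) + T / N) - F0 (x : ℝ) ≤ 1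
    linarith [hF0le1 ((x:ℝ) + T/N), hF0nonneg (x:ℝ)]
  have hWmem : ∀ x : ℝ, 0 ≤ x →
      F0 (x + T / N) - F0 x ≤ ⨆ x : Ici (0:ℝ), (F0 ((x : ℝ) + T / N) - F0 (x : ℝ)) :=
    fun x hx => le_ciSup hWbdd (⟨x, mem_Ici.mpr hx⟩ : Ici (0:ℝ))
  have hW0 : 0 ≤ ⨆ x : Ici (0:ℝ), (F0 ((x : ℝ) + T / N) - F0 (x : ℝ)) := by
    refine le_trans ?_ (hWmem 0 le_rfl)
    have := hF0mono (by linarith : (0:ℝ) ≤ 0 + T/N)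
    linarith
  have hsbdd : BddAbove (range fun t : Icc (0:ℝ) T => |Ln (t : ℝ) - L (t : ℝ)|) := by
    refine ⟨|Ln 0| + |Ln T| + 1, ?_⟩
    rintro _ ⟨⟨u, hu0, huT⟩, rfl⟩
    show |Ln u - L u| ≤ |Ln 0| + |Ln T| + 1
    have h1 : Ln 0 ≤ Ln u := hLn ⟨le_rfl, hT.le⟩ ⟨hu0, huT⟩ hu0
    have h2 : Ln u ≤ Ln T := hLn ⟨hu0, huT⟩ ⟨hT.le, le_rfl⟩ huT
    have h3 : 0 ≤ L u ∧ L u ≤ 1 := by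
      rw [hL]
      constructor
      · nlinarith [hρle1 u, hρnn u]
      · nlinarith [hρle1 u, hρnn u]
    rw [abs_le]
    constructor
    · linarith [h3.2, neg_abs_le (Ln 0), abs_nonneg (Ln T)]
    · linarith [h3.1, le_abs_self (Ln T), abs_nonneg (Ln 0)]
  have hsmem : ∀ u : ℝ, u ∈ Icc (0:ℝ) T →
      |Ln u - L u| ≤ ⨆ t : Icc (0:ℝ) T, |Ln (t : ℝ) - L (t : ℝ)| :=
    fun u hu => le_ciSup hsbdd (⟨u, hu⟩ : Icc (0:ℝ) T)
  have hs0 : 0 ≤ ⨆ t : Icc (0:ℝ) T, |Ln (t : ℝ) - L (t : ℝ)| :=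
    le_trans (abs_nonneg _) (hsmem 0 ⟨le_rfl, hT.le⟩)
  -- grid facts
  have hgridmem : ∀ j : ℕ, j ≤ N → (j : ℝ) * (T / N) ∈ Icc (0:ℝ) T := by
    intro j hj
    constructor
    · positivity
    · have hjR : (j:ℝ) ≤ N := by exact_mod_cast hj
      calc (j:ℝ) * (T/N) ≤ N * (T/N) := by
            exact mul_le_mul_of_nonneg_right hjR hdt.le
        _ = T := by field_simp
  have hmass1 : ∀ u : ℝ, u ∈ Icc (0:ℝ) T → ((μ u) univ).toReal ≤ 1 := by
    intro u hu
    haveI := hμfin u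
    have := ENNReal.toReal_mono ENNReal.one_ne_top (hmass u hu)
    simpa using this
  have hmass2 : ∀ u : ℝ, 0 ≤ ρ u →
      ((ENNReal.ofReal (ρ u) • Sstar u empN) univ).toReal ≤ 1 := by
    intro u hu
    have h1 : (ENNReal.ofReal (ρ u) • Sstar u empN) univ ≤ 1 := by
      rw [Measure.smul_apply, smul_eq_mul]
      calc ENNReal.ofReal (ρ u) * (Sstar u empN) univ
          ≤ 1 * 1 := by
            refine mul_le_mul' (ENNReal.ofReal_le_one.mpr (hρle1 u)) ?_
            rw [← hempN_univ]; exact Sstar_univ_le u empN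
        _ = 1 := one_mul 1
    have := ENNReal.toReal_mono ENNReal.one_ne_top h1
    simpa using this
  have hG2 : ∀ j : Fin (N+1), dBL (μ ((j : ℕ) * (T / N)))
      (ENNReal.ofReal (ρ ((j : ℕ) * (T / N))) • Sstar ((j : ℕ) * (T / N)) empN) ≤ 2 := by
    intro j
    set u : ℝ := (j : ℕ) * (T / N) with hu
    have hmem : u ∈ Icc (0:ℝ) T := hgridmem (j : ℕ) (by omega)
    haveI := hμfin u
    haveI := smul_finite (ρ u) (Sstar u empN)
    refine (dBL_le_mass _ _).trans ?_
    have := hmass1 u hmem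
    have := hmass2 u (hρnn u)
    linarith
  have hGbdd : BddAbove (range fun j : Fin (N+1) => dBL (μ ((j : ℕ) * (T / N)))
      (ENNReal.ofReal (ρ ((j : ℕ) * (T / N))) • Sstar ((j : ℕ) * (T / N)) empN)) := by
    refine ⟨2, ?_⟩
    rintro _ ⟨j, rfl⟩
    exact hG2 j
  have hGmem : ∀ j : ℕ, j ≤ N → dBL (μ ((j : ℝ) * (T / N)))
      (ENNReal.ofReal (ρ ((j : ℝ) * (T / N))) • Sstar ((j : ℝ) * (T / N)) empN)
      ≤ ⨆ i : Fin (N + 1), dBL (μ ((i : ℕ) * (T / N)))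
            (ENNReal.ofReal (ρ ((i : ℕ) * (T / N))) • Sstar ((i : ℕ) * (T / N)) empN) := by
    intro j hj
    have := le_ciSup hGbdd (⟨j, by omega⟩ : Fin (N+1))
    exact this
  have hG0 : 0 ≤ ⨆ i : Fin (N + 1), dBL (μ ((i : ℕ) * (T / N)))
      (ENNReal.ofReal (ρ ((i : ℕ) * (T / N))) • Sstar ((i : ℕ) * (T / N)) empN) := by
    refine le_trans ?_ (hGmem 0 (by omega))
    haveI := hμfin ((0:ℝ) * (T/N))
    haveI := smul_finite (ρ ((0:ℝ) * (T/N))) (Sstar ((0:ℝ) * (T/N)) empN)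
    simpa using dBL_nonneg (μ ((0:ℝ) * (T/N)))
      (ENNReal.ofReal (ρ ((0:ℝ) * (T/N))) • Sstar ((0:ℝ) * (T/N)) empN)
  -- main: bound each t
  refine ciSup_le ?_
  rintro ⟨t, ht0, htT⟩
  show dBL (μ t) (ENNReal.ofReal (ρ t) • Sstar t empN) ≤ _
  -- grid point below t
  set i : ℕ := ⌊t / (T / N)⌋₊ with hidef
  have hti_le : (i : ℝ) * (T / N) ≤ t := by
    calc (i : ℝ) * (T / N) ≤ (t / (T/N)) * (T/N) :=
          mul_le_mul_of_nonneg_right (Nat.floor_le (by positivity)) hdt.le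
      _ = t := div_mul_cancel₀ t hdt.ne'
  have ht_le : t ≤ (i : ℝ) * (T / N) + T / N := by
    have h1 : t / (T/N) < (i : ℝ) + 1 := Nat.lt_floor_add_one (t / (T/N))
    have h2 : t < ((i:ℝ) + 1) * (T/N) := by
      rw [← div_lt_iff₀ hdt]; exact h1
    have h3 : ((i:ℝ) + 1) * (T/N) = (i:ℝ) * (T/N) + T/N := by ring
    linarith only [h2, h3]
  have hiN : i ≤ N := by
    have h1 : t / (T/N) ≤ (N:ℝ) := by
      rw [div_le_iff₀ hdt]
      calc t ≤ T := htT
        _ = (N:ℝ) * (T/N) := by field_simp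
    have := Nat.floor_mono h1
    rwa [Nat.floor_natCast] at this
  set ti : ℝ := (i : ℝ) * (T / N) with htidef
  have hti0 : 0 ≤ ti := by positivity
  have htiT : ti ≤ T := hti_le.trans htT
  have htimem : ti ∈ Icc (0:ℝ) T := ⟨hti0, htiT⟩
  haveI := hμfin t
  haveI := hμfin ti
  set d : ℝ := t - ti with hddef
  have hd0 : 0 ≤ d := by rw [hddef]; linarith
  have hdle : d ≤ T / N := by rw [hddef]; linarith
  set δ : ℝ := F0 t - F0 ti with hδdef
  have hδ0 : 0 ≤ δ := sub_nonneg.mpr (hF0mono hti_le)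
  have hδW : δ ≤ ⨆ x : Ici (0:ℝ), (F0 ((x : ℝ) + T / N) - F0 (x : ℝ)) := by
    refine le_trans ?_ (hWmem ti hti0)
    have h1 := hF0mono ht_le
    rw [hδdef]; linarith only [h1]
  -- abbreviations for the sups
  set sv : ℝ := ⨆ t : Icc (0:ℝ) T, |Ln (t : ℝ) - L (t : ℝ)| with hsv
  set Wv : ℝ := ⨆ x : Ici (0:ℝ), (F0 ((x : ℝ) + T / N) - F0 (x : ℝ)) with hWv
  set Gv : ℝ := ⨆ i : Fin (N + 1), dBL (μ ((i : ℕ) * (T / N)))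
      (ENNReal.ofReal (ρ ((i : ℕ) * (T / N))) • Sstar ((i : ℕ) * (T / N)) empN) with hGv
  refine dBL_le_of_forall (by linarith only [hG0, hs0, hW0, hdt.le, hinv.le]) ?_
  intro φ hφ
  obtain ⟨ca, cb, hab, haφ, hbφ⟩ := hφ
  have hca0 : (0:ℝ) ≤ ca := ca.coe_nonneg
  have hca1 : (ca:ℝ) ≤ 1 := by linarith [cb.coe_nonneg]
  have hφc : Continuous φ := hbφ.continuous
  obtain ⟨ψ, hψa, hψlip, hψeq, hψpos, hψneg⟩ := psi_exists haφ hbφ d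
  have hψc : Continuous ψ := hψlip.continuous
  have hψtic : Continuous (fun x : ℝ => ψ (x - ti)) :=
    hψc.comp (continuous_id.sub continuous_const)
  have hψtia : ∀ x : ℝ, |ψ (x - ti)| ≤ ca := fun x => hψa _
  -- instances
  haveI := Sstar_finite d (μ ti)
  haveI := Sstar_finite ti empN
  haveI := Sstar_finite t empN
  haveI := smul_finite (ρ ti) (Sstar ti empN)
  haveI := smul_finite (ρ t) (Sstar t empN)
  -- integrability
  have int2 : Integrable ψ (μ ti) := integrable_of_bound ca hψc hψa _
  have int3 : Integrable (fun x => ψ (x - ti)) empN := integrable_of_bound ca hψtic hψtia _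
  -- names
  set A1 : ℝ := ∫ x, φ x ∂(μ t) with hA1
  set A2 : ℝ := ∫ x, φ x ∂(Sstar d (μ ti)) with hA2
  set P : ℝ := ∫ x, ψ x ∂(μ ti) with hP
  set Q : ℝ := ∫ x in Iio d, ψ x ∂(μ ti) with hQ
  set X : ℝ := ∫ x, ψ x ∂(Sstar ti empN) with hX
  set Y : ℝ := ∫ x in Ico ti t, ψ (x - ti) ∂empN with hY
  set Z : ℝ := ∫ x, ψ x ∂(ENNReal.ofReal (ρ ti) • Sstar ti empN) with hZ
  set TGT : ℝ := ∫ x, φ x ∂(ENNReal.ofReal (ρ t) • Sstar t empN) with hTGT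
  -- equalities
  have eA : A2 = P - Q := by
    rw [hA2, integral_Sstar hφc d (μ ti)]
    have e2 : ∫ x in Ici d, φ (x - d) ∂(μ ti) = ∫ x in Ici d, ψ x ∂(μ ti) :=
      setIntegral_congr_fun measurableSet_Ici (fun x hx => (hψeq x hx).symm)
    have e3 : ∫ x in Ici d, ψ x ∂(μ ti) + ∫ x in Iio d, ψ x ∂(μ ti) = ∫ x, ψ x ∂(μ ti) := by
      have := integral_add_compl (s := Ici d) measurableSet_Ici int2
      rwa [compl_Ici] at this
    rw [e2, hP, hQ]
    linarith only [e3]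
  have eT : TGT = ρ t * (X - Y) := by
    rw [hTGT, integral_smul_measure, ENNReal.toReal_ofReal (hρnn t), smul_eq_mul,
      integral_Sstar hφc t empN]
    have e5 : ∫ x in Ici t, φ (x - t) ∂empN = ∫ x in Ici t, ψ (x - ti) ∂empN := by
      refine setIntegral_congr_fun measurableSet_Ici (fun x hx => ?_)
      have hxd : d ≤ x - ti := by rw [hddef]; simp only [mem_Ici] at hx; linarith
      rw [hψeq (x - ti) hxd]
      congr 1
      rw [hddef]; ring
    have e6 : X = ∫ x in Ici ti, ψ (x - ti) ∂empN := by
      rw [hX, integral_Sstar hψc ti empN]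
    have e7 : ∫ x in Ici ti, ψ (x - ti) ∂empN
        = (∫ x in Ico ti t, ψ (x - ti) ∂empN) + ∫ x in Ici t, ψ (x - ti) ∂empN := by
      rw [← setIntegral_union (by
          refine disjoint_left.mpr ?_
          intro x hx hx'
          exact absurd hx' (not_le.mpr hx.2)) measurableSet_Ici
          int3.integrableOn int3.integrableOn, Ico_union_Ici_eq_Ici hti_le]
    rw [e5]
    have : ∫ x in Ici t, ψ (x - ti) ∂empN = X - Y := by
      rw [e6, e7, hY]; ring
    rw [this]
  have eZ : ρ ti * X = Z := by
    rw [hZ, integral_smul_measure, ENNReal.toReal_ofReal (hρnn ti), smul_eq_mul, hX]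
  -- inequalities
  have iA : A1 - A2 ≤ 2 * (Ln t - Ln ti) := by
    have h1 := hshift ti t hti0 hti_le htT
    have h2 : A1 - A2 ≤ dBL (μ t) (Sstar d (μ ti)) :=
      le_dBL ⟨ca, cb, hab, haφ, hbφ⟩
    rw [hddef] at h2
    exact h2.trans h1
  have iL : 2 * (Ln t - Ln ti) ≤ 4 * sv + 2 * δ := by
    have h1 : |Ln t - L t| ≤ sv := hsmem t ⟨ht0, htT⟩
    have h2 : |Ln ti - L ti| ≤ sv := hsmem ti htimem
    have h3 : L t - L ti ≤ δ := by
      rw [hL, hL, hρ, hρ, hδdef]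
      have hp : 0 ≤ (F0 t - F0 ti) * (F0 t + F0 ti) :=
        mul_nonneg (sub_nonneg.mpr (hF0mono hti_le))
          (by linarith only [hF0nonneg t, hF0nonneg ti])
      have hq : (F0 t - F0 ti) * (F0 t + F0 ti) = F0 t^2 - F0 ti^2 := by ring
      have hr : (1 - (1 - F0 t)^2)/2 - (1 - (1 - F0 ti)^2)/2
          = (F0 t - F0 ti) - (F0 t^2 - F0 ti^2)/2 := by ring
      linarith only [hp, hq, hr]
    linarith only [h1, h2, h3, le_abs_self (Ln t - L t), le_abs_self (Ln ti - L ti),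
      neg_abs_le (Ln ti - L ti)]
  have iG : P - Z ≤ Gv := by
    have h2 : P - Z ≤ dBL (μ ti) (ENNReal.ofReal (ρ ti) • Sstar ti empN) :=
      le_dBL ⟨ca, cb, hab, hψa, hψlip⟩
    refine h2.trans ?_
    rw [htidef]
    have := hGmem i hiN
    exact_mod_cast this
  have iX : (ρ ti - ρ t) * X ≤ δ * ca := by
    have habs : |X| ≤ ca * ((Sstar ti empN) univ).toReal := by
      rw [hX]; exact abs_integral_le_bound ca hψc hψa _
    have hm : ((Sstar ti empN) univ).toReal ≤ 1 := by
      have h1 : (Sstar ti empN) univ ≤ 1 := by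
        rw [← hempN_univ]; exact Sstar_univ_le ti empN
      have := ENNReal.toReal_mono ENNReal.one_ne_top h1
      simpa using this
    have hXle : X ≤ ca := by
      have h1 : ca * ((Sstar ti empN) univ).toReal ≤ ca * 1 :=
        mul_le_mul_of_nonneg_left hm hca0
      linarith only [le_abs_self X, habs, h1]
    have hρdiff : ρ ti - ρ t = δ := by rw [hρ, hρ, hδdef]; ring
    rw [hρdiff]
    exact mul_le_mul_of_nonneg_left hXle hδ0
  have iB : -Q + ρ t * Y ≤ ca * (Wv + 1/n) := by
    have hBnn : 0 ≤ ca * (Wv + 1/n) := by positivity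
    rcases le_or_gt 0 (φ 0) with hsign | hsign
    · -- φ 0 ≥ 0 : Q ≥ 0 and Y bounded via empN mass on [ti, t)
      have hQ0 : 0 ≤ Q := by
        rw [hQ]
        exact setIntegral_nonneg measurableSet_Iio fun x hx => (hψpos hsign x hx).1
      have hYabs : |Y| ≤ ca * (empN (Ico ti t)).toReal := by
        rw [hY]; exact abs_setIntegral_le_bound ca hψtic hψtia empN _
      have hm : (empN (Ico ti t)).toReal ≤ Wv + 1/n := by
        refine (hempN_Ico ti t hti_le).trans ?_
        have h1 : F0 t - F0 ti ≤ Wv := hδW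
        linarith only [h1]
      have hYB : Y ≤ ca * (Wv + 1/n) := by
        have h2 : ca * (empN (Ico ti t)).toReal ≤ ca * (Wv + 1/n) :=
          mul_le_mul_of_nonneg_left hm hca0
        linarith only [le_abs_self Y, hYabs, h2]
      rcases le_or_gt Y 0 with hY' | hY'
      · have h3 : ρ t * Y ≤ 0 := mul_nonpos_iff.mpr (Or.inl ⟨hρnn t, hY'⟩)
        linarith only [h3, hQ0, hBnn]
      · have h3 : ρ t * Y ≤ Y := mul_le_of_le_one_left hY'.le (hρle1 t)
        linarith only [h3, hYB, hQ0]
    · -- φ 0 < 0 : Y ≤ 0 and Q bounded via ω(d, μ ti)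
      have hsign' : φ 0 ≤ 0 := hsign.le
      have hY0 : Y ≤ 0 := by
        rw [hY]
        refine setIntegral_nonpos measurableSet_Ico fun x hx => ?_
        have hxd : x - ti < d := by rw [hddef]; simp only [mem_Ico] at hx; linarith [hx.2]
        exact (hψneg hsign' (x - ti) hxd).2
      have hQabs : |Q| ≤ ca * ((μ ti) (Iio d)).toReal := by
        rw [hQ]; exact abs_setIntegral_le_bound ca hψc hψa _ _
      have hμd : ((μ ti) (Iio d)).toReal ≤ Wv + 1/n := by
        rcases le_or_gt d 0 with hd' | hd'
        · have h0 : (μ ti) (Iio d) = 0 := by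
            refine le_antisymm ?_ zero_le
            refine le_trans (measure_mono (Iio_subset_Iio hd')) ?_
            rw [hμsupp ti htimem]
          rw [h0]
          simp only [ENNReal.toReal_zero]
          linarith only [hW0, hinv.le]
        · have m1 : (μ ti) (Iio d) ≤ (μ ti) (Ico 0 d) := by
            calc (μ ti) (Iio d) ≤ (μ ti) (Iio 0 ∪ Ico 0 d) := by
                  refine measure_mono ?_
                  intro x hx
                  rcases lt_or_ge x 0 with h | h
                  · exact Or.inl h
                  · exact Or.inr ⟨h, hx⟩
              _ ≤ (μ ti) (Iio 0) + (μ ti) (Ico 0 d) := measure_union_le _ _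
              _ = (μ ti) (Ico 0 d) := by rw [hμsupp ti htimem, zero_add]
          have m1' : ((μ ti) (Iio d)).toReal ≤ ((μ ti) (Ico 0 d)).toReal :=
            ENNReal.toReal_mono (measure_ne_top _ _) m1
          have m2 : ((μ ti) (Ico 0 d)).toReal ≤ omegaMeas d (μ ti) := by
            have hb : BddAbove (range fun x : Ici (0:ℝ) =>
                ((μ ti) (Ico (x:ℝ) ((x:ℝ) + d))).toReal) := by
              refine ⟨((μ ti) univ).toReal, ?_⟩
              rintro _ ⟨x, rfl⟩
              exact ENNReal.toReal_mono (measure_ne_top _ _) (measure_mono (subset_univ _))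
            have := le_ciSup hb (⟨0, self_mem_Ici⟩ : Ici (0:ℝ))
            simp only [omegaMeas]
            simpa using this
          have m3 : omegaMeas d (μ ti) ≤ omegaMeas d empN := hmod d hd' ti htimem
          have m4 : omegaMeas d empN ≤ Wv + 1/n := by
            simp only [omegaMeas]
            refine ciSup_le fun x => ?_
            have hx0 : (0:ℝ) ≤ (x:ℝ) := x.2
            calc (empN (Ico (x:ℝ) ((x:ℝ) + d))).toReal
                ≤ (empN (Ico (x:ℝ) ((x:ℝ) + T/N))).toReal :=
                  ENNReal.toReal_mono (measure_ne_top _ _)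
                    (measure_mono (Ico_subset_Ico_right (by linarith only [hdle])))
              _ ≤ F0 ((x:ℝ) + T/N) - F0 (x:ℝ) + 1/n := hempN_Ico _ _ (by linarith only [hx0, hdt.le])
              _ ≤ Wv + 1/n := by linarith only [hWmem (x:ℝ) hx0]
          linarith only [m1', m2, m3, m4]
      have hQB : -Q ≤ ca * (Wv + 1/n) := by
        have h2 : ca * ((μ ti) (Iio d)).toReal ≤ ca * (Wv + 1/n) :=
          mul_le_mul_of_nonneg_left hμd hca0
        linarith only [neg_abs_le Q, hQabs, h2]
      have h3 : ρ t * Y ≤ 0 := mul_nonpos_iff.mpr (Or.inl ⟨hρnn t, hY0⟩)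
      linarith only [hQB, h3]
  -- combine
  have hring1 : (ρ ti - ρ t) * X = ρ ti * X - ρ t * X := by ring
  have hring2 : ρ t * (X - Y) = ρ t * X - ρ t * Y := by ring
  have hδca : δ * ca ≤ Wv := by
    have h1 : δ * ca ≤ δ * 1 := mul_le_mul_of_nonneg_left hca1 hδ0
    linarith only [h1, hδW]
  have hcaW : ca * (Wv + 1/n) ≤ Wv + 1/n :=
    mul_le_of_le_one_left (by linarith only [hW0, hinv.le]) hca1
  have goal1 : A1 - TGT ≤ Gv + (4 * sv + 4 * Wv + 1/n) := by
    linarith only [iA, iL, iG, iX, iB, eA, eZ, eT, hring1, hring2, hδca, hcaW, hδW]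
  have goal2 : Gv + (4 * sv + 4 * Wv + 1/n) ≤ Gv + 4 * (sv + Wv + T/N + 1/n) := by
    linarith only [hdt.le, hinv.le]
  linarith only [goal1, goal2]
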